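/- For every Young diagram λ there exist integers (ω_{i,j})_{(i,j)∈λ}, depending only on λ, with the following property: for every tableau x of shape λ with entries in ℝ≥0, every tableau r satisfying the RSK relations with respect to x and every tableau b satisfying the Burge relations with respect to x satisfy Σ_{(i,j)∈λ} ω_{i,j} r_{i,j} = Σ_{(i,j)∈λ} x_{i,j} = Σ_{(i,j)∈λ} ω_{i,j} b_{i,j}. -/

import Mathlib

/-- Two lattice points are adjacent (ℓ¹-distance 1). -/
def AdjStep (p q : ℕ × ℕ) : Prop :=
  ((p.1 : ℤ) - q.1).natAbs + ((p.2 : ℤ) - q.2).natAbs = 1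

/-- `π` is a directed lattice path from `(a,b)` to `(c,d)`:
a sequence of minimal length `|c-a|+|d-b|` of adjacent lattice points. -/
def IsDirPath (a b c d : ℕ) (π : List (ℕ × ℕ)) : Prop :=
  π.length = ((c : ℤ) - a).natAbs + ((d : ℤ) - b).natAbs + 1 ∧
  π.head? = some (a, b) ∧ π.getLast? = some (c, d) ∧
  π.Chain' AdjStep

/-- A family in `Π^{(k)}_{m,n}`: `k` pairwise disjoint directed lattice paths,
the `i`-th from `(1,i)` to `(m, n-k+i)` (`1 ≤ i ≤ k`). -/
def NIPathFamily (m n k : ℕ) (π : Fin k → List (ℕ × ℕ)) : Prop :=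
  (∀ i : Fin k, IsDirPath 1 (i.1 + 1) m (n - k + (i.1 + 1)) (π i)) ∧
  ∀ i j : Fin k, i ≠ j → ∀ p ∈ π i, p ∉ π j

/-- A family in `Π*^{(k)}_{m,n}`: `k` pairwise disjoint directed lattice paths,
the `i`-th from `(m,i)` to `(1, n-k+i)` (`1 ≤ i ≤ k`). -/
def NIPathFamilyDual (m n k : ℕ) (π : Fin k → List (ℕ × ℕ)) : Prop :=
  (∀ i : Fin k, IsDirPath m (i.1 + 1) 1 (n - k + (i.1 + 1)) (π i)) ∧
  ∀ i j : Fin k, i ≠ j → ∀ p ∈ π i, p ∉ π j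

/-- `max_{π ∈ Π^{(k)}_{m,n}} Σ_{(i,j)∈π} x_{i,j}`. -/
noncomputable def maxFlow {α : Type*} [AddCommMonoid α] [SupSet α]
    (x : ℕ × ℕ → α) (m n k : ℕ) : α :=
  sSup {v | ∃ π : Fin k → List (ℕ × ℕ), NIPathFamily m n k π ∧
    v = ∑ i : Fin k, ((π i).map x).sum}

/-- `max_{π ∈ Π*^{(k)}_{m,n}} Σ_{(i,j)∈π} x_{i,j}`. -/
noncomputable def maxFlowDual {α : Type*} [AddCommMonoid α] [SupSet α]
    (x : ℕ × ℕ → α) (m n k : ℕ) : α :=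
  sSup {v | ∃ π : Fin k → List (ℕ × ℕ), NIPathFamilyDual m n k π ∧
    v = ∑ i : Fin k, ((π i).map x).sum}

/-- A (finite) Young diagram: boxes have coordinates ≥ 1 and the set is
downward closed: with each box it contains the whole rectangle `[1,i]×[1,j]`. -/
def IsYoungDiagram (lam : Finset (ℕ × ℕ)) : Prop :=
  ∀ p ∈ lam, 1 ≤ p.1 ∧ 1 ≤ p.2 ∧ ∀ q ∈ Finset.Icc (1, 1) p, q ∈ lam

/-- `r` satisfies the RSK relations with respect to `x` on the Young diagram `λ`:
for every border box `(m,n)` and `1 ≤ k ≤ min m n`,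
`Σ_{i=1}^k r_{m-i+1,n-i+1} = max_{π ∈ Π^{(k)}_{m,n}} Σ_{(i,j)∈π} x_{i,j}`. -/
def SatisfiesRSKRel {α : Type*} [AddCommMonoid α] [SupSet α]
    (lam : Finset (ℕ × ℕ)) (x r : ℕ × ℕ → α) : Prop :=
  ∀ m n : ℕ, (m, n) ∈ lam → (m + 1, n + 1) ∉ lam →
    ∀ k : ℕ, 1 ≤ k → k ≤ min m n →
      ∑ i ∈ Finset.range k, r (m - i, n - i) = maxFlow x m n k

/-- `b` satisfies the Burge relations with respect to `x` on the Young diagram `λ`. -/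
def SatisfiesBurgeRel {α : Type*} [AddCommMonoid α] [SupSet α]
    (lam : Finset (ℕ × ℕ)) (x b : ℕ × ℕ → α) : Prop :=
  ∀ m n : ℕ, (m, n) ∈ lam → (m + 1, n + 1) ∉ lam →
    ∀ k : ℕ, 1 ≤ k → k ≤ min m n →
      ∑ i ∈ Finset.range k, b (m - i, n - i) = maxFlowDual x m n k

/-- A tableau (encoded as a function on `ℕ×ℕ` vanishing off `λ`) is interlacing if its
entries weakly increase along rows and columns of `λ`. -/
def IsInterlacing {α : Type*} [Preorder α] (lam : Finset (ℕ × ℕ)) (f : ℕ × ℕ → α) : Prop :=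
  ∀ p ∈ lam, (1 < p.1 → f (p.1 - 1, p.2) ≤ f p) ∧ (1 < p.2 → f (p.1, p.2 - 1) ≤ f p)

/-!
Fix a border box `(m, n)` and `k = min m n`. Each path of a family in `Π^{(k)}_{m,n}` or
`Π*^{(k)}_{m,n}` has exactly `m + n - k` points, all in the `m × n` rectangle, so `k` disjoint
ones have `k (m + n - k) = m n` points and cover the rectangle. Such families exist (hook-shaped
paths, and their mirror images for Burge), so both maxima equal the rectangle sum of `x`, and the
RSK and Burge relations for `k = min m n` say that the full diagonal sums of `r` and of `b` ending
at `(m, n)` equal that rectangle sum. Finally, with `λₘ` the length of row `m`, `λ` is the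
alternating sum of the rectangles of `(m, λₘ)` and `(m, λₘ₊₁)` over its rows `m`, and replacing
each rectangle by its diagonal gives the integer weights `ω`.
-/

open Finset

theorem List.IsChain.dist_add_one_le_length_of_adjStep :
    ∀ {l : List (ℕ × ℕ)} {u v : ℕ × ℕ}, l.IsChain AdjStep → l.head? = some u →
      l.getLast? = some v → ((v.1 : ℤ) - u.1).natAbs + ((v.2 : ℤ) - u.2).natAbs + 1 ≤ l.length
  | [], _, _, _, hu, _ => by simp at hu
  | [a], u, v, _, hu, hv => by
    obtain rfl : a = u := by simpa using hu
    obtain rfl : a = v := by simpa using hv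
    simp
  | a :: b :: l, u, v, hch, hu, hv => by
    obtain rfl : a = u := by simpa using hu
    rw [List.isChain_cons_cons] at hch
    have htail :=
      hch.2.dist_add_one_le_length_of_adjStep rfl (by rwa [List.getLast?_cons_cons] at hv)
    have hab := hch.1
    unfold AdjStep at hab
    simp only [List.length_cons] at htail ⊢
    omega

/-- Minimality of the length forces every step to decrease the distance to the endpoint. -/
theorem IsDirPath.nodup_and_mem_box :
    ∀ {l : List (ℕ × ℕ)} {a b c d : ℕ}, IsDirPath a b c d l →
      l.Nodup ∧ ∀ p ∈ l, min a c ≤ p.1 ∧ p.1 ≤ max a c ∧ min b d ≤ p.2 ∧ p.2 ≤ max b d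
  | [], _, _, _, _, ⟨_, hh, _⟩ => by simp at hh
  | [q], a, b, c, d, ⟨_, hh, hl, _⟩ => by
    obtain rfl : q = (a, b) := by simpa using hh
    obtain ⟨rfl, rfl⟩ : a = c ∧ b = d := by simpa using hl
    simp
  | q :: (e, f) :: l, a, b, c, d, ⟨hlen, hh, hl, hch⟩ => by
    obtain rfl : q = (a, b) := by simpa using hh
    replace hch := List.isChain_cons_cons.mp hch
    rw [List.getLast?_cons_cons] at hl
    have hlen' := hch.2.dist_add_one_le_length_of_adjStep rfl hl
    have hadj := hch.1
    unfold AdjStep at hadj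
    simp only [List.length_cons] at hlen hlen'
    obtain ⟨hnd, hbox⟩ := IsDirPath.nodup_and_mem_box (a := e) (b := f)
      ⟨by simp only [List.length_cons]; omega, rfl, hl, hch.2⟩
    refine ⟨List.nodup_cons.mpr ⟨fun hmem => ?_, hnd⟩, ?_⟩
    · have := hbox _ hmem
      simp only at this
      omega
    · intro p hp
      rcases List.mem_cons.mp hp with rfl | hp
      · simp only; omega
      · have := hbox p hp; omega

def reflectRow (m : ℕ) (p : ℕ × ℕ) : ℕ × ℕ := (m + 1 - p.1, p.2)

theorem IsDirPath.map_reflectRow {l : List (ℕ × ℕ)} {a b c d m : ℕ} (h : IsDirPath a b c d l)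
    (ham : a ≤ m) (hcm : c ≤ m) :
    IsDirPath (m + 1 - a) b (m + 1 - c) d (l.map (reflectRow m)) := by
  obtain ⟨hlen, hh, hl, hch⟩ := h
  have hbox := (IsDirPath.nodup_and_mem_box ⟨hlen, hh, hl, hch⟩).2
  refine ⟨?_, by rw [List.head?_map, hh]; rfl, by rw [List.getLast?_map, hl]; rfl, ?_⟩
  · rw [List.length_map, hlen]; omega
  · refine List.isChain_map _ |>.mpr <| hch.imp_of_mem_imp fun p q hp hq hpq => ?_
    have := hbox p hp
    have := hbox q hq
    unfold AdjStep reflectRow at *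
    omega

theorem NIPathFamily.map_reflectRow {m n k : ℕ} {π : Fin k → List (ℕ × ℕ)}
    (h : NIPathFamily m n k π) (hm : 1 ≤ m) :
    NIPathFamilyDual m n k fun i => (π i).map (reflectRow m) := by
  have hrow : ∀ i, ∀ p ∈ π i, p.1 ≤ m := fun i p hp => by
    have := (IsDirPath.nodup_and_mem_box (h.1 i)).2 p hp; omega
  refine ⟨fun i => ?_, fun i j hij p hpi hpj => ?_⟩
  · have := (h.1 i).map_reflectRow hm le_rfl
    rwa [Nat.add_sub_cancel, Nat.add_sub_cancel_left] at this
  · obtain ⟨q, hq, rfl⟩ := List.mem_map.mp hpi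
    obtain ⟨q', hq', hqq'⟩ := List.mem_map.mp hpj
    obtain rfl : q' = q := by
      have := hrow i q hq
      have := hrow j q' hq'
      unfold reflectRow at hqq'
      ext <;> simp only [Prod.mk.injEq] at hqq' <;> omega
    exact h.2 i j hij q' hq hq'

/-- The lattice path going down column `b` from row `a` to row `h`, then right along row `h` to
column `d`, then down column `d` to row `c`. -/
def hookPath (a b c d h : ℕ) : List (ℕ × ℕ) :=
  (List.range (c - a + (d - b) + 1)).map fun t =>
    if t ≤ h - a then (a + t, b)
    else if t ≤ h - a + (d - b) then (h, b + (t - (h - a)))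
    else (h + (t - (h - a) - (d - b)), d)

section hookPath

variable {a b c d h : ℕ}

theorem isDirPath_hookPath (hah : a ≤ h) (hhc : h ≤ c) (hbd : b ≤ d) :
    IsDirPath a b c d (hookPath a b c d h) := by
  refine ⟨?_, ?_, ?_, ?_⟩
  · simp only [hookPath, List.length_map, List.length_range]; omega
  · simp [hookPath, List.head?_range]
  · simp only [hookPath, List.getLast?_map, List.getLast?_range]
    simp only [Nat.add_eq_zero_iff, one_ne_zero, and_false, if_false, Option.map_some,
      Nat.add_sub_cancel, Option.some.injEq]
    split_ifs <;> ext <;> simp only <;> omega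
  · show List.IsChain _ _
    rw [hookPath, List.isChain_map, List.isChain_range]
    intro t _
    unfold AdjStep
    split_ifs <;> simp only <;> omega

theorem mem_hookPath (hah : a ≤ h) (hhc : h ≤ c) (hbd : b ≤ d) {p : ℕ × ℕ}
    (hp : p ∈ hookPath a b c d h) :
    (a ≤ p.1 ∧ p.1 ≤ h ∧ p.2 = b) ∨ (p.1 = h ∧ b ≤ p.2 ∧ p.2 ≤ d) ∨
      (h ≤ p.1 ∧ p.1 ≤ c ∧ p.2 = d) := by
  obtain ⟨t, ht, rfl⟩ := List.mem_map.mp hp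
  rw [List.mem_range] at ht
  split_ifs <;> simp only [and_true, true_and] <;> omega

end hookPath

def hookFamily (m n k : ℕ) (i : Fin k) : List (ℕ × ℕ) :=
  hookPath 1 (i + 1) m (n - k + (i + 1)) (m - i)

theorem nIPathFamily_hookFamily {m n k : ℕ} (hk : k ≤ min m n) :
    NIPathFamily m n k (hookFamily m n k) := by
  refine ⟨fun i => isDirPath_hookPath (by omega) (by omega) (by omega), fun i j hij p hpi hpj => ?_⟩
  have hne : (i : ℕ) ≠ j := Fin.val_ne_of_ne hij
  have := mem_hookPath (by omega) (by omega) (by omega) hpi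
  have := mem_hookPath (by omega) (by omega) (by omega) hpj
  omega

theorem sum_map_sum_eq_sum_of_disjoint_of_card_le {ι α M : Type*} [Fintype ι] [DecidableEq α]
    [AddCommMonoid M] {l : ι → List α} {s : Finset α} (hnd : ∀ i, (l i).Nodup)
    (hsub : ∀ i, ∀ a ∈ l i, a ∈ s) (hdisj : Pairwise fun i j => ∀ a ∈ l i, a ∉ l j)
    (hcard : #s ≤ ∑ i, (l i).length) (f : α → M) :
    ∑ i, ((l i).map f).sum = ∑ a ∈ s, f a := by
  have hdisj' : (↑(univ : Finset ι) : Set ι).PairwiseDisjoint fun i => (l i).toFinset :=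
    fun i _ j _ hij => Finset.disjoint_left.mpr fun a hi hj =>
      hdisj hij a (List.mem_toFinset.mp hi) (List.mem_toFinset.mp hj)
  have hcover : univ.biUnion (fun i => (l i).toFinset) = s := by
    refine Finset.eq_of_subset_of_card_le (fun a ha => ?_) ?_
    · obtain ⟨i, -, hi⟩ := mem_biUnion.mp ha
      exact hsub i a (List.mem_toFinset.mp hi)
    · simpa [card_biUnion hdisj', List.toFinset_card_of_nodup (hnd _)] using hcard
  rw [← hcover, sum_biUnion hdisj']
  exact sum_congr rfl fun i _ => (List.sum_toFinset f (hnd i)).symm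

theorem sum_paths_eq_sum_Icc {α : Type*} [AddCommMonoid α] {m n a c : ℕ} (hac : min a c = 1)
    (hca : max a c = m) {π : Fin (min m n) → List (ℕ × ℕ)}
    (hπ : ∀ i : Fin (min m n), IsDirPath a (i + 1) c (n - min m n + (i + 1)) (π i))
    (hdisj : ∀ i j, i ≠ j → ∀ p ∈ π i, p ∉ π j) (x : ℕ × ℕ → α) :
    ∑ i, ((π i).map x).sum = ∑ p ∈ Icc (1, 1) (m, n), x p := by
  refine sum_map_sum_eq_sum_of_disjoint_of_card_le (fun i => (IsDirPath.nodup_and_mem_box (hπ i)).1)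
    (fun i p hp => ?_) hdisj ?_ x
  · have := (IsDirPath.nodup_and_mem_box (hπ i)).2 p hp
    rw [mem_Icc, Prod.le_def, Prod.le_def]
    omega
  · have hlen : ∀ i, (π i).length = m + n - min m n := fun i => by have := (hπ i).1; omega
    simp only [hlen, sum_const, card_univ, Fintype.card_fin, smul_eq_mul, card_Icc_prod,
      Nat.card_Icc, Nat.add_sub_cancel]
    rcases le_total m n with h | h
    · rw [min_eq_left h, Nat.add_sub_cancel_left]
    · rw [min_eq_right h, Nat.add_sub_cancel, mul_comm]

theorem sSup_setOf_exists_eq {ι β : Type*} [ConditionallyCompleteLattice β] {P : ι → Prop}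
    {F : ι → β} {c : β} (hne : ∃ i, P i) (h : ∀ i, P i → F i = c) :
    sSup {v | ∃ i, P i ∧ v = F i} = c := by
  have : {v | ∃ i, P i ∧ v = F i} = {c} := by
    ext v
    refine ⟨fun ⟨i, hi, hv⟩ => hv.trans (h i hi), fun hv => ?_⟩
    obtain ⟨i, hi⟩ := hne
    exact ⟨i, hi, hv.trans (h i hi).symm⟩
  rw [this, csSup_singleton]

section maxFlow

variable {α : Type*} [AddCommMonoid α] [ConditionallyCompleteLattice α]

theorem maxFlow_min (x : ℕ × ℕ → α) {m n : ℕ} (hm : 1 ≤ m) :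
    maxFlow x m n (min m n) = ∑ p ∈ Icc (1, 1) (m, n), x p :=
  sSup_setOf_exists_eq ⟨_, nIPathFamily_hookFamily le_rfl⟩ fun _ hπ =>
    sum_paths_eq_sum_Icc (by omega) (by omega) hπ.1 hπ.2 x

theorem maxFlowDual_min (x : ℕ × ℕ → α) {m n : ℕ} (hm : 1 ≤ m) :
    maxFlowDual x m n (min m n) = ∑ p ∈ Icc (1, 1) (m, n), x p :=
  sSup_setOf_exists_eq ⟨_, (nIPathFamily_hookFamily le_rfl).map_reflectRow hm⟩ fun _ hπ =>
    sum_paths_eq_sum_Icc (by omega) (by omega) hπ.1 hπ.2 x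

end maxFlow

def rowLen (lam : Finset (ℕ × ℕ)) (m : ℕ) : ℕ :=
  lam.sup fun q => if q.1 = m then q.2 else 0

def diagEndingAt (m n : ℕ) : Finset (ℕ × ℕ) :=
  (range (min m n)).image fun i => (m - i, n - i)

theorem sum_diagEndingAt {M : Type*} [AddCommMonoid M] (f : ℕ × ℕ → M) (m n : ℕ) :
    ∑ p ∈ diagEndingAt m n, f p = ∑ i ∈ range (min m n), f (m - i, n - i) :=
  sum_image fun i hi j hj hij => by
    simp only [coe_range, Set.mem_Iio, Prod.mk.injEq] at hi hj hij; omega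

theorem diagEndingAt_subset_Icc (m n : ℕ) : diagEndingAt m n ⊆ Icc (1, 1) (m, n) := by
  intro p hp
  obtain ⟨i, hi, rfl⟩ := mem_image.mp hp
  rw [mem_range] at hi
  rw [mem_Icc, Prod.mk_le_mk, Prod.mk_le_mk]
  omega

def signedRowCount (lam : Finset (ℕ × ℕ)) (S : ℕ → ℕ → Finset (ℕ × ℕ)) (p : ℕ × ℕ) : ℤ :=
  ∑ m ∈ Icc 1 (lam.sup Prod.fst),
    ((if p ∈ S m (rowLen lam m) then 1 else 0) - if p ∈ S m (rowLen lam (m + 1)) then 1 else 0)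

section YoungDiagram

variable {lam : Finset (ℕ × ℕ)}

theorem le_rowLen {p : ℕ × ℕ} (hp : p ∈ lam) : p.2 ≤ rowLen lam p.1 := by
  have := le_sup (f := fun q : ℕ × ℕ => if q.1 = p.1 then q.2 else 0) hp
  rwa [if_pos rfl] at this

theorem rowLen_eq_zero_of_lt {m : ℕ} (hm : lam.sup Prod.fst < m) : rowLen lam m = 0 := by
  refine Nat.eq_zero_of_le_zero (Finset.sup_le fun q hq => ?_)
  have : q.1 ≤ lam.sup Prod.fst := le_sup (f := Prod.fst) hq
  rw [if_neg (by omega)]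

theorem IsYoungDiagram.mem_iff_le_rowLen (hlam : IsYoungDiagram lam) {m j : ℕ} (hm : 1 ≤ m)
    (hj : 1 ≤ j) : (m, j) ∈ lam ↔ j ≤ rowLen lam m := by
  refine ⟨le_rowLen, fun hle => ?_⟩
  obtain ⟨q, hq, hjq⟩ := (Finset.le_sup_iff (show ⊥ < j from hj)).mp hle
  split_ifs at hjq with hqm
  · exact (hlam q hq).2.2 _ (by rw [mem_Icc, Prod.le_def, Prod.le_def]; omega)
  · omega

theorem IsYoungDiagram.rowLen_succ_le (hlam : IsYoungDiagram lam) {m : ℕ} (hm : 1 ≤ m) :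
    rowLen lam (m + 1) ≤ rowLen lam m := by
  rcases Nat.eq_zero_or_pos (rowLen lam (m + 1)) with h | h
  · omega
  have := (hlam.mem_iff_le_rowLen (by omega) h).mpr le_rfl
  exact (hlam.mem_iff_le_rowLen hm h).mp ((hlam _ this).2.2 _ (by
    rw [mem_Icc, Prod.le_def, Prod.le_def]; omega))

theorem IsYoungDiagram.border_of_rowLen_le (hlam : IsYoungDiagram lam) {m n : ℕ} (hm : 1 ≤ m)
    (hn : 1 ≤ n) (h₁ : rowLen lam (m + 1) ≤ n) (h₂ : n ≤ rowLen lam m) :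
    (m, n) ∈ lam ∧ (m + 1, n + 1) ∉ lam :=
  ⟨(hlam.mem_iff_le_rowLen hm hn).mpr h₂,
    fun h => by have := (hlam.mem_iff_le_rowLen (by omega) (by omega)).mp h; omega⟩

theorem sum_signedRowCount_mul {R : Type*} [Ring R] (S : ℕ → ℕ → Finset (ℕ × ℕ))
    (f : ℕ × ℕ → R) :
    ∑ p ∈ lam, (signedRowCount lam S p : R) * f p =
      ∑ m ∈ Icc 1 (lam.sup Prod.fst), (∑ p ∈ lam ∩ S m (rowLen lam m), f p -
        ∑ p ∈ lam ∩ S m (rowLen lam (m + 1)), f p) := by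
  simp only [signedRowCount, Int.cast_sum, Int.cast_sub, Int.cast_ite, Int.cast_one,
    Int.cast_zero, sum_mul, sub_mul, ite_mul, one_mul, zero_mul]
  rw [sum_comm]
  simp only [sum_sub_distrib, sum_ite_mem]

theorem IsYoungDiagram.signedRowCount_Icc (hlam : IsYoungDiagram lam) {p : ℕ × ℕ} (hp : p ∈ lam) :
    signedRowCount lam (fun m n => Icc (1, 1) (m, n)) p = 1 := by
  set M := lam.sup Prod.fst
  set g : ℕ → ℤ := fun m => if p.2 ≤ rowLen lam m then 1 else 0
  obtain ⟨hp₁, hp₂, -⟩ := hlam p hp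
  have hpM : p.1 ≤ M := le_sup (f := Prod.fst) hp
  have hterm : ∀ m ∈ Icc 1 M, ((if p ∈ Icc (1, 1) (m, rowLen lam m) then 1 else 0) -
      if p ∈ Icc (1, 1) (m, rowLen lam (m + 1)) then 1 else 0) =
      if p.1 ≤ m then g m - g (m + 1) else 0 := fun m _ => by
    simp only [g, mem_Icc, Prod.le_def]
    split_ifs <;> omega
  have hfilter : {m ∈ Icc 1 M | p.1 ≤ m} = Ico p.1 (M + 1) := by
    ext m; simp only [mem_filter, mem_Icc, mem_Ico]; omega
  have htele := sum_Ico_sub g (show p.1 ≤ M + 1 by omega)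
  have hg₁ : g p.1 = 1 := if_pos (le_rowLen hp)
  have hg₂ : g (M + 1) = 0 := by simp [g, rowLen_eq_zero_of_lt (Nat.lt_succ_self M)]; omega
  rw [signedRowCount, sum_congr rfl hterm, ← sum_filter, hfilter]
  calc ∑ m ∈ Ico p.1 (M + 1), (g m - g (m + 1))
      = -∑ m ∈ Ico p.1 (M + 1), (g (m + 1) - g m) := by simp only [← sum_neg_distrib, neg_sub]
    _ = 1 := by rw [htele, hg₁, hg₂]; rfl

theorem IsYoungDiagram.sum_inter_diagEndingAt_eq_sum_inter_Icc {M : Type*} [AddCommMonoid M]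
    (hlam : IsYoungDiagram lam) {x r : ℕ × ℕ → M}
    (H : ∀ m n, (m, n) ∈ lam → (m + 1, n + 1) ∉ lam →
      ∑ i ∈ range (min m n), r (m - i, n - i) = ∑ p ∈ Icc (1, 1) (m, n), x p)
    {m n : ℕ} (hm : 1 ≤ m) (h₁ : rowLen lam (m + 1) ≤ n) (h₂ : n ≤ rowLen lam m) :
    ∑ p ∈ lam ∩ diagEndingAt m n, r p = ∑ p ∈ lam ∩ Icc (1, 1) (m, n), x p := by
  rcases Nat.eq_zero_or_pos n with rfl | hn
  · have : Icc (1, 1) (m, 0) = ∅ := Icc_eq_empty (by simp [Prod.le_def])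
    simp [diagEndingAt, this]
  obtain ⟨hmem, hnot⟩ := hlam.border_of_rowLen_le hm hn h₁ h₂
  have hIcc : Icc (1, 1) (m, n) ⊆ lam := (hlam _ hmem).2.2
  rw [inter_eq_right.mpr ((diagEndingAt_subset_Icc m n).trans hIcc), inter_eq_right.mpr hIcc,
    sum_diagEndingAt, H m n hmem hnot]

/-- The rectangle of `(m, rowLen lam m)` minus that of `(m, rowLen lam (m + 1))` consists of the
columns of length `m`, so these differences tile `lam`; each rectangle sum is a diagonal sum
ending at a border box. -/
theorem IsYoungDiagram.sum_signedRowCount_diagEndingAt_mul {R : Type*} [Ring R]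
    (hlam : IsYoungDiagram lam) {x r : ℕ × ℕ → R}
    (H : ∀ m n, (m, n) ∈ lam → (m + 1, n + 1) ∉ lam →
      ∑ i ∈ range (min m n), r (m - i, n - i) = ∑ p ∈ Icc (1, 1) (m, n), x p) :
    ∑ p ∈ lam, (signedRowCount lam diagEndingAt p : R) * r p = ∑ p ∈ lam, x p := calc
  _ = ∑ m ∈ Icc 1 (lam.sup Prod.fst), (∑ p ∈ lam ∩ Icc (1, 1) (m, rowLen lam m), x p -
        ∑ p ∈ lam ∩ Icc (1, 1) (m, rowLen lam (m + 1)), x p) := by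
    rw [sum_signedRowCount_mul]
    refine sum_congr rfl fun m hm => ?_
    have hm : 1 ≤ m := (mem_Icc.mp hm).1
    rw [hlam.sum_inter_diagEndingAt_eq_sum_inter_Icc H hm (hlam.rowLen_succ_le hm) le_rfl,
      hlam.sum_inter_diagEndingAt_eq_sum_inter_Icc H hm le_rfl (hlam.rowLen_succ_le hm)]
  _ = ∑ p ∈ lam, (signedRowCount lam (fun m n => Icc (1, 1) (m, n)) p : R) * x p :=
    (sum_signedRowCount_mul (fun m n => Icc (1, 1) (m, n)) x).symm
  _ = ∑ p ∈ lam, x p :=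
    sum_congr rfl fun p hp => by rw [hlam.signedRowCount_Icc hp, Int.cast_one, one_mul]

end YoungDiagram

/-- **Theorem.** For any Young diagram `λ` there are integer coefficients `ω` such that
for any tableau `x` of shape `λ` with entries in `ℝ≥0`, any `r` satisfying the RSK
relations and any `b` satisfying the Burge relations w.r.t. `x` obey
`Σ ω_{i,j} r_{i,j} = Σ x_{i,j} = Σ ω_{i,j} b_{i,j}` (sums over `λ`). -/
theorem exists_int_coeffs_sum_RSK_eq_sum_eq_sum_Burge
    (lam : Finset (ℕ × ℕ)) (hlam : IsYoungDiagram lam) :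
    ∃ ω : ℕ × ℕ → ℤ, ∀ x r b : ℕ × ℕ → NNReal,
      SatisfiesRSKRel lam x r → SatisfiesBurgeRel lam x b →
      (∑ p ∈ lam, (ω p : ℝ) * (r p : ℝ)) = (∑ p ∈ lam, (x p : ℝ)) ∧
      (∑ p ∈ lam, (x p : ℝ)) = ∑ p ∈ lam, (ω p : ℝ) * (b p : ℝ) := by
  refine ⟨signedRowCount lam diagEndingAt, fun x r b hr hb => ⟨?_, ?_⟩⟩
  · refine hlam.sum_signedRowCount_diagEndingAt_mul fun m n hmem hnot => ?_
    obtain ⟨hm, hn, -⟩ := hlam _ hmem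
    have h := hr m n hmem hnot (min m n) (le_min hm hn) le_rfl
    rw [maxFlow_min x hm] at h
    exact_mod_cast h
  · refine (hlam.sum_signedRowCount_diagEndingAt_mul fun m n hmem hnot => ?_).symm
    obtain ⟨hm, hn, -⟩ := hlam _ hmem
    have h := hb m n hmem hnot (min m n) (le_min hm hn) le_rfl
    rw [maxFlowDual_min x hm] at h
    exact_mod_cast h
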